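/- arXiv:1911.02491 — 4 statements merged into one kernel-verified Lean document; each statement's English description precedes it below -/
import Mathlib

section
/- Theorem 1, part 2 (upper bound via the Taylor microscale of the computed solution): Let ν, L, U, C_E be positive reals and set Re = LU/ν. Let g, k : (0,∞) → ℝ be nonnegative locally integrable functions with 0 < ⟨g⟩_∞ < ∞ and 0 < ⟨k⟩_∞ ≤ C_E² U². Define the Taylor microscale of the computed solution by λ_T := ( (1/15)⟨g⟩_∞ / ⟨k⟩_∞ )^{-1/2} = (15 ⟨k⟩_∞ / ⟨g⟩_∞)^{1/2}. Then ⟨2ν g⟩_∞ ≤ 30 C_E² [ Re^{-1} (λ_T/L)^{-2} ] · U³/L. In particular, if λ_T ≥ √30 C_E Re^{-1/2} L, then ⟨2ν g⟩_∞ ≤ U³/L. -/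
open MeasureTheory Filter

/-- Finite time average `⟨φ⟩_T = (1/T) ∫_0^T φ(t) dt`. -/
noncomputable def timeAvg (φ : ℝ → ℝ) (T : ℝ) : ℝ :=
  (1 / T) * ∫ t in Set.Ioc (0 : ℝ) T, φ t

/-- Long-time average `⟨φ⟩_∞ = limsup_{T→∞} ⟨φ⟩_T`. -/
noncomputable def longAvg (φ : ℝ → ℝ) : ℝ :=
  Filter.limsup (timeAvg φ) Filter.atTop

lemma timeAvg_nonneg {φ : ℝ → ℝ} (h : ∀ t, 0 ≤ φ t) (T : ℝ) : 0 ≤ timeAvg φ T := by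
  rcases le_or_gt T 0 with hT | hT
  · have : Set.Ioc (0 : ℝ) T = ∅ := Set.Ioc_eq_empty (by exact fun h' => absurd (h'.trans_le hT) (lt_irrefl 0))
    simp [timeAvg, this]
  · apply mul_nonneg (by positivity)
    exact setIntegral_nonneg measurableSet_Ioc fun t _ => h t

lemma timeAvg_const_mul (c : ℝ) (φ : ℝ → ℝ) (T : ℝ) :
    timeAvg (fun t => c * φ t) T = c * timeAvg φ T := by
  unfold timeAvg
  rw [MeasureTheory.integral_const_mul]; ring

lemma longAvg_const_mul {c : ℝ} (hc : 0 < c) {φ : ℝ → ℝ} (h0 : ∀ t, 0 ≤ φ t)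
    (hb : IsBoundedUnder (· ≤ ·) Filter.atTop (timeAvg φ)) :
    longAvg (fun t => c * φ t) = c * longAvg φ := by
  have hco : IsCoboundedUnder (· ≤ ·) Filter.atTop (timeAvg φ) :=
    isCoboundedUnder_le_of_eventually_le _ (Eventually.of_forall (timeAvg_nonneg h0))
  have hb2 : IsBoundedUnder (· ≤ ·) Filter.atTop (fun T => c * timeAvg φ T) := by
    obtain ⟨M, hM⟩ := hb
    rw [eventually_map] at hM
    refine ⟨c * M, ?_⟩
    rw [eventually_map]
    filter_upwards [hM] with T hT using mul_le_mul_of_nonneg_left hT hc.le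
  have hco2 : IsCoboundedUnder (· ≤ ·) Filter.atTop (fun T => c * timeAvg φ T) :=
    isCoboundedUnder_le_of_eventually_le _ (Eventually.of_forall fun T =>
      mul_nonneg hc.le (timeAvg_nonneg h0 T))
  have := (OrderIso.mulLeft₀ c hc).limsup_apply (u := timeAvg φ) (f := Filter.atTop)
    hb hco hb2 hco2
  simp only [OrderIso.mulLeft₀_apply] at this
  unfold longAvg
  have hfun : timeAvg (fun t => c * φ t) = fun T => c * timeAvg φ T :=
    funext fun T => timeAvg_const_mul c φ T
  rw [hfun, ← this]

/-- Theorem 1, part 2 (upper bound via the Taylor microscale of the computed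
solution).  Here `g t` plays the role of `(1/|Ω|)‖∇ˢuʰ(t)‖²`, `k t` that of
`(1/|Ω|)‖uʰ(t)‖²`, and `λ_T = (15⟨k⟩_∞/⟨g⟩_∞)^{1/2}` is the Taylor microscale
of the computed solution.  Then
`⟨2νg⟩_∞ ≤ 30 C_E² [Re⁻¹ (λ_T/L)⁻²] U³/L`, and if
`λ_T ≥ √30 C_E Re^{-1/2} L` then `⟨2νg⟩_∞ ≤ U³/L`. -/
theorem dissipation_bound_via_taylor_microscale
    (ν L U C_E Re : ℝ)
    (hν : 0 < ν) (hL : 0 < L) (hU : 0 < U) (hCE : 0 < C_E)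
    (hRe : Re = L * U / ν)
    (g k : ℝ → ℝ) (hg0 : ∀ t, 0 ≤ g t) (hk0 : ∀ t, 0 ≤ k t)
    (hgloc : LocallyIntegrableOn g (Set.Ioi (0 : ℝ)))
    (hkloc : LocallyIntegrableOn k (Set.Ioi (0 : ℝ)))
    (hgpos : 0 < longAvg g)
    (hgbdd : IsBoundedUnder (· ≤ ·) Filter.atTop (timeAvg g))
    (hkpos : 0 < longAvg k)
    (hkbdd : IsBoundedUnder (· ≤ ·) Filter.atTop (timeAvg k))
    (hA3 : longAvg k ≤ C_E ^ 2 * U ^ 2)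
    (lam : ℝ) (hlam : lam = Real.sqrt (15 * longAvg k / longAvg g)) :
    longAvg (fun t => 2 * ν * g t) ≤
        30 * C_E ^ 2 * (Re⁻¹ * ((lam / L) ^ 2)⁻¹) * (U ^ 3 / L) ∧
      (lam ≥ Real.sqrt 30 * C_E * Re ^ (-(1 : ℝ) / 2) * L →
        longAvg (fun t => 2 * ν * g t) ≤ U ^ 3 / L) := by
  set G := longAvg g with hG
  set K := longAvg k with hK
  have hnu2 : (0:ℝ) < 2 * ν := by linarith
  have havg : longAvg (fun t => 2 * ν * g t) = 2 * ν * G := by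
    have := longAvg_const_mul hnu2 hg0 hgbdd
    simpa using this
  have hlam2 : lam ^ 2 = 15 * K / G := by
    rw [hlam, Real.sq_sqrt] <;> positivity
  have hlampos : 0 < lam := by
    rw [hlam]; positivity
  have hRepos : 0 < Re := by rw [hRe]; positivity
  -- key equality: 2νG = 30 ν K / lam²
  have hGeq : G = 15 * K / lam ^ 2 := by
    rw [hlam2]; field_simp
  -- RHS simplification
  have hrhs : 30 * C_E ^ 2 * (Re⁻¹ * ((lam / L) ^ 2)⁻¹) * (U ^ 3 / L)
      = 30 * C_E ^ 2 * ν * U ^ 2 / lam ^ 2 := by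
    rw [hRe]; field_simp
  have hmain : longAvg (fun t => 2 * ν * g t) ≤ 30 * C_E ^ 2 * ν * U ^ 2 / lam ^ 2 := by
    rw [havg, hGeq]
    have heq : 2 * ν * (15 * K / lam ^ 2) = (30 * ν * K) / lam ^ 2 := by ring
    rw [heq, div_le_div_iff₀ (by positivity) (by positivity)]
    nlinarith [mul_le_mul_of_nonneg_left hA3 (show (0:ℝ) ≤ 30 * ν * lam ^ 2 by positivity)]
  constructor
  · rw [hrhs]; exact hmain
  · intro hge
    have h30 : Real.sqrt 30 * C_E * Re ^ (-(1:ℝ)/2) * L > 0 := by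
      have : (0:ℝ) < Re ^ (-(1:ℝ)/2) := Real.rpow_pos_of_pos hRepos _
      positivity
    have hsq : (Real.sqrt 30 * C_E * Re ^ (-(1:ℝ)/2) * L) ^ 2 ≤ lam ^ 2 := by
      apply pow_le_pow_left₀ h30.le hge
    have hrp : (Re ^ (-(1:ℝ)/2)) ^ 2 = Re⁻¹ := by
      rw [← Real.rpow_natCast (Re ^ (-(1:ℝ)/2)) 2, ← Real.rpow_mul hRepos.le]
      norm_num
      rw [show ((-1:ℝ)) = -(1:ℝ) by norm_num, Real.rpow_neg_one]
    have hsq' : 30 * C_E ^ 2 * Re⁻¹ * L ^ 2 ≤ lam ^ 2 := by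
      have h30' : Real.sqrt 30 ^ 2 = 30 := Real.sq_sqrt (by norm_num)
      calc 30 * C_E ^ 2 * Re⁻¹ * L ^ 2
          = Real.sqrt 30 ^ 2 * C_E ^ 2 * (Re ^ (-(1:ℝ)/2)) ^ 2 * L ^ 2 := by rw [h30', hrp]
        _ = (Real.sqrt 30 * C_E * Re ^ (-(1:ℝ)/2) * L) ^ 2 := by ring
        _ ≤ lam ^ 2 := hsq
    refine hmain.trans ?_
    rw [div_le_div_iff₀ (by positivity) hL]
    have hReinv : Re⁻¹ = ν / (L * U) := by rw [hRe]; field_simp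
    rw [hReinv] at hsq'
    -- 30 C_E² ν U² L ≤ U³ lam²  given lam² ≥ 30 C_E² ν L / U
    have : 30 * C_E ^ 2 * (ν / (L * U)) * L ^ 2 * U ^ 3 ≤ lam ^ 2 * U ^ 3 := by
      exact mul_le_mul_of_nonneg_right hsq' (by positivity)
    have heq : 30 * C_E ^ 2 * (ν / (L * U)) * L ^ 2 * U ^ 3
        = 30 * C_E ^ 2 * ν * U ^ 2 * L := by field_simp
    nlinarith
end

section
/- Theorem 1, part 2 (no under-dissipation when the Taylor microscale is resolved): Let ν, L, U, c_E be positive reals and set Re = LU/ν. Let g, k : (0,∞) → ℝ be nonnegative locally integrable functions with 0 < ⟨g⟩_∞ < ∞, ⟨k⟩_∞ < ∞, and ⟨k⟩_∞ ≥ c_E² U². Define the Taylor microscale λ_T := (15 ⟨k⟩_∞ / ⟨g⟩_∞)^{1/2}. If λ_T ≤ (√30/2) Re^{-1/2} L, then ⟨2ν g⟩_∞ ≥ 4 c_E² U³/L; that is, the long-time averaged energy dissipation rate of the computed solution is of the order U³/L (the flow in the aggregate is not under-diffused). -/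
open MeasureTheory Filter

/-- Theorem 1, part 2 (no under-dissipation when the Taylor microscale is
resolved).  Here `g t` plays the role of `(1/|Ω|)‖∇ˢuʰ(t)‖²`, `k t` that of
`(1/|Ω|)‖uʰ(t)‖²`, and `λ_T = (15⟨k⟩_∞/⟨g⟩_∞)^{1/2}` is the Taylor microscale
of the computed solution.  If `λ_T ≤ (√30/2) Re^{-1/2} L` then
`⟨2νg⟩_∞ ≥ 4 c_E² U³/L`, i.e. the flow in the aggregate is not under-diffused. -/
theorem no_under_dissipation_when_taylor_microscale_resolved
    (ν L U c_E Re : ℝ)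
    (hν : 0 < ν) (hL : 0 < L) (hU : 0 < U) (hcE : 0 < c_E)
    (hRe : Re = L * U / ν)
    (g k : ℝ → ℝ) (hg0 : ∀ t, 0 ≤ g t) (hk0 : ∀ t, 0 ≤ k t)
    (hgloc : LocallyIntegrableOn g (Set.Ioi (0 : ℝ)))
    (hkloc : LocallyIntegrableOn k (Set.Ioi (0 : ℝ)))
    (hgpos : 0 < longAvg g)
    (hgbdd : IsBoundedUnder (· ≤ ·) Filter.atTop (timeAvg g))
    (hkbdd : IsBoundedUnder (· ≤ ·) Filter.atTop (timeAvg k))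
    (hA3 : c_E ^ 2 * U ^ 2 ≤ longAvg k)
    (lam : ℝ) (hlam : lam = Real.sqrt (15 * longAvg k / longAvg g))
    (hsmall : lam ≤ Real.sqrt 30 / 2 * Re ^ (-(1 : ℝ) / 2) * L) :
    longAvg (fun t => 2 * ν * g t) ≥ 4 * c_E ^ 2 * (U ^ 3 / L) := by
  -- abbreviations
  set G := longAvg g with hG
  set K := longAvg k with hK
  have hRe0 : 0 < Re := by rw [hRe]; positivity
  have hK0 : 0 < K := lt_of_lt_of_le (by positivity) hA3
  -- nonnegativity of time averages of g, eventually
  have hgev : ∀ᶠ T in atTop, (0:ℝ) ≤ timeAvg g T := by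
    filter_upwards [eventually_gt_atTop (0:ℝ)] with T hT
    have : (0:ℝ) ≤ ∫ t in Set.Ioc (0:ℝ) T, g t :=
      setIntegral_nonneg measurableSet_Ioc (fun t _ => hg0 t)
    exact mul_nonneg (by positivity) this
  have hgco : IsCoboundedUnder (· ≤ ·) atTop (timeAvg g) :=
    isCoboundedUnder_le_of_eventually_le atTop hgev
  -- scaling: longAvg (2νg) = 2ν * G
  have hscale : longAvg (fun t => 2 * ν * g t) = 2 * ν * G := by
    have hiso := (OrderIso.mulLeft₀ (2 * ν) (by positivity)).limsup_apply
      (f := atTop) (u := timeAvg g) hgbdd hgco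
      (by
        obtain ⟨b, hb⟩ := hgbdd
        refine ⟨2 * ν * b, ?_⟩
        rw [eventually_map] at hb ⊢
        filter_upwards [hb] with T hT
        simp only [OrderIso.mulLeft₀_apply]
        exact mul_le_mul_of_nonneg_left hT (by positivity : (0:ℝ) ≤ 2 * ν))
      (isCoboundedUnder_le_of_eventually_le atTop
        (by
          filter_upwards [hgev] with T hT
          simp only [OrderIso.mulLeft₀_apply]
          positivity))
    have heq : (fun T => (OrderIso.mulLeft₀ (2 * ν) (by positivity : (0:ℝ) < 2 * ν)) (timeAvg g T))
        = timeAvg (fun t => 2 * ν * g t) := by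
      funext T
      simp only [OrderIso.mulLeft₀_apply, timeAvg]
      rw [integral_const_mul]
      ring
    rw [longAvg, ← heq, ← hiso]
    rfl
  rw [hscale]
  -- from hsmall, bound G from below
  have hlamsq : 15 * K / G ≤ 30 / 4 * (Re ^ (-(1:ℝ)/2)) ^ 2 * L ^ 2 := by
    have harg : 0 ≤ 15 * K / G := by positivity
    have h1 : Real.sqrt (15 * K / G) ≤ Real.sqrt 30 / 2 * Re ^ (-(1:ℝ)/2) * L := by
      rw [← hlam]; exact hsmall
    have h2 := mul_self_le_mul_self (Real.sqrt_nonneg _) h1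
    rw [Real.mul_self_sqrt harg] at h2
    calc 15 * K / G ≤ (Real.sqrt 30 / 2 * Re ^ (-(1:ℝ)/2) * L) *
          (Real.sqrt 30 / 2 * Re ^ (-(1:ℝ)/2) * L) := h2
      _ = (Real.sqrt 30 * Real.sqrt 30) / 4 * (Re ^ (-(1:ℝ)/2)) ^ 2 * L ^ 2 := by ring
      _ = 30 / 4 * (Re ^ (-(1:ℝ)/2)) ^ 2 * L ^ 2 := by
          rw [Real.mul_self_sqrt (by norm_num)]
  have hrpow : (Re ^ (-(1:ℝ)/2)) ^ 2 = 1 / Re := by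
    rw [← Real.rpow_natCast (Re ^ (-(1:ℝ)/2)) 2, ← Real.rpow_mul hRe0.le]
    norm_num [Real.rpow_neg_one, one_div]
  rw [hrpow] at hlamsq
  -- so 15 K / G ≤ (15/2) ν L / U
  have hfrac : 15 * K / G ≤ 15 / 2 * (ν * L / U) :=
    calc 15 * K / G ≤ 30 / 4 * (1 / Re) * L ^ 2 := hlamsq
      _ = 15 / 2 * (ν * L / U) := by rw [hRe]; field_simp; ring
  -- G ≥ 2 U K / (ν L)
  have hGlow : 2 * U * K / (ν * L) ≤ G := by
    rw [div_le_iff₀ (by positivity : (0:ℝ) < ν * L)]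
    have h5 : 15 * K ≤ 15 / 2 * (ν * L / U) * G := (div_le_iff₀ hgpos).mp hfrac
    have h6 : 15 / 2 * (ν * L / U) * G * U = 15 / 2 * (ν * L) * G := by
      field_simp
    have h7 := mul_le_mul_of_nonneg_right h5 hU.le
    rw [h6] at h7
    linarith
  -- conclude
  have h1 : 2 * ν * (2 * U * K / (ν * L)) ≤ 2 * ν * G :=
    mul_le_mul_of_nonneg_left hGlow (by positivity)
  have h2 : 2 * ν * (2 * U * K / (ν * L)) = 4 * U * K / L := by
    field_simp; ring
  have h3 : 4 * c_E ^ 2 * (U ^ 3 / L) ≤ 4 * U * K / L := by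
    rw [show 4 * c_E ^ 2 * (U ^ 3 / L) = 4 * c_E ^ 2 * U ^ 3 / L from by ring]
    rw [div_le_div_iff₀ hL hL]
    nlinarith [mul_le_mul_of_nonneg_left hA3 (by positivity : (0:ℝ) ≤ 4 * U * L)]
  linarith
end

section
/- Theorem 2 (algebraic core: the time-averaged energy dissipation of an eddy viscosity model is controlled by the averaged turbulent viscosity): Let F, U, L, ν, C > 0 and 0 < β < 1, and set Re = LU/ν. Let e, y, n : (0,∞) → ℝ be nonnegative bounded functions with limsup_{T→∞} y(T) = U² and N := limsup_{T→∞} n(T) < ∞. Assume that for every T > 0: (i) e(T) ≤ C/T + F·√(y(T)); and (ii) F² ≤ C/T + (F/L)·y(T) + (β/2)(F/U)·e(T) + (1/β)·U F ν/L² + (1/(2β))·(U F/L²)·n(T). Then limsup_{T→∞} e(T) ≤ ( 2/(2−β) + (2/(β(2−β)))·Re^{-1} + (1/(β(2−β)))·N/(LU) ) · U³/L. -/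
/-!
Let `E = limsup e`. Passing to the limit superior in (i) gives `E ≤ F U`, and in (ii) gives
`F² ≤ (F/L) U² + (β/2)(F/U) E + (1/β) U F ν/L² + (1/(2β)) (U F/L²) N`.
Dividing the latter by `F` and multiplying by `U` bounds `F U`, hence `E`, by
`U³/L + (β/2) E + …`; since `β < 2` the term `(β/2) E` is absorbed into the left-hand side.
-/

open Filter Topology

lemma le_of_forall_pos_le_of_tendsto {g : ℝ → ℝ} {x a : ℝ} (hg : Tendsto g (𝓝[>] 0) (𝓝 a))
    (h : ∀ ε > 0, x ≤ g ε) : x ≤ a :=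
  ge_of_tendsto hg (eventually_nhdsWithin_of_forall h)

lemma eventually_const_div_lt (C : ℝ) {ε : ℝ} (hε : 0 < ε) : ∀ᶠ T in atTop, C / T < ε :=
  (tendsto_const_nhds.div_atTop tendsto_id).eventually (gt_mem_nhds hε)

lemma limsup_le_mul_sqrt_limsup {e y : ℝ → ℝ} {C F : ℝ} (hF : 0 ≤ F)
    (he : IsCoboundedUnder (· ≤ ·) atTop e) (hy : IsBoundedUnder (· ≤ ·) atTop y)
    (h : ∀ T > 0, e T ≤ C / T + F * √(y T)) :
    limsup e atTop ≤ F * √(limsup y atTop) := by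
  refine le_of_forall_pos_le_of_tendsto (g := fun ε ↦ ε + F * √(limsup y atTop + ε)) ?_ ?_
  · exact ((by fun_prop : Continuous _).tendsto' 0 _ (by simp)).mono_left nhdsWithin_le_nhds
  · intro ε hε
    refine limsup_le_of_le he ?_
    filter_upwards [eventually_const_div_lt C hε,
      eventually_lt_of_limsup_lt (lt_add_of_pos_right _ hε) hy, eventually_gt_atTop 0]
      with T hCT hyT hT
    calc e T ≤ C / T + F * √(y T) := h T hT
      _ ≤ ε + F * √(limsup y atTop + ε) := by gcongr

lemma le_limsup_combination_of_forall_le {y e n : ℝ → ℝ} {x C a b c d : ℝ}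
    (ha : 0 ≤ a) (hb : 0 ≤ b) (hd : 0 ≤ d)
    (hy : IsBoundedUnder (· ≤ ·) atTop y) (he : IsBoundedUnder (· ≤ ·) atTop e)
    (hn : IsBoundedUnder (· ≤ ·) atTop n)
    (h : ∀ T > 0, x ≤ C / T + a * y T + b * e T + c + d * n T) :
    x ≤ a * limsup y atTop + b * limsup e atTop + c + d * limsup n atTop := by
  set Y := limsup y atTop
  set E := limsup e atTop
  set N := limsup n atTop
  refine le_of_forall_pos_le_of_tendsto
    (g := fun ε ↦ ε + a * (Y + ε) + b * (E + ε) + c + d * (N + ε)) ?_ ?_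
  · exact ((by fun_prop : Continuous _).tendsto' 0 _ (by simp)).mono_left nhdsWithin_le_nhds
  · intro ε hε
    obtain ⟨T, hCT, hyT, heT, hnT, hT⟩ := (eventually_const_div_lt C hε |>.and <|
      eventually_lt_of_limsup_lt (lt_add_of_pos_right Y hε) hy |>.and <|
      eventually_lt_of_limsup_lt (lt_add_of_pos_right E hε) he |>.and <|
      eventually_lt_of_limsup_lt (lt_add_of_pos_right N hε) hn |>.and <|
      eventually_gt_atTop 0).exists
    calc x ≤ C / T + a * y T + b * e T + c + d * n T := h T hT
      _ ≤ ε + a * (Y + ε) + b * (E + ε) + c + d * (N + ε) := by gcongr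

lemma dissipation_le_of_sq_force_le {F U L ν β E N : ℝ} (hF : 0 < F) (hU : 0 < U) (hL : 0 < L)
    (hβ0 : 0 < β) (hβ2 : β < 2) (hE : E ≤ F * U)
    (hF2 : F ^ 2 ≤ (F / L) * U ^ 2 + (β / 2) * (F / U) * E +
        (1 / β) * (U * F * ν / L ^ 2) + (1 / (2 * β)) * (U * F / L ^ 2) * N) :
    E ≤ (2 / (2 - β) + (2 / (β * (2 - β))) * (L * U / ν)⁻¹ +
        (1 / (β * (2 - β))) * (N / (L * U))) * (U ^ 3 / L) := by
  set K := U ^ 2 / L + (β / 2) * E / U + (1 / β) * (U * ν / L ^ 2) +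
    (1 / (2 * β)) * (U / L ^ 2) * N
  have hFK : F ≤ K := by
    refine le_of_mul_le_mul_left ?_ hF
    calc F * F = F ^ 2 := by ring
      _ ≤ _ := hF2
      _ = F * K := by ring
  set S := U ^ 3 / L + (1 / β) * (U ^ 2 * ν / L ^ 2) + (1 / (2 * β)) * (U ^ 2 / L ^ 2) * N
  have hUK : U * K = S + (β / 2) * E := by
    simp only [K, S]
    field_simp
    ring
  have hES : (1 - β / 2) * E ≤ S := by
    linarith [mul_le_mul_of_nonneg_left hFK hU.le]
  have h2β : 0 < 2 - β := by linarith
  calc E ≤ 2 * S / (2 - β) := by rw [le_div_iff₀ h2β]; linarith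
    _ = _ := by
      simp only [S]
      rw [inv_div]
      field_simp

theorem eddy_viscosity_dissipation_bound_general
    (F U L ν C β Re N : ℝ)
    (hF : 0 < F) (hU : 0 < U) (hL : 0 < L)
    (hβ0 : 0 < β) (hβ1 : β < 1) (hRe : Re = L * U / ν)
    (e y n : ℝ → ℝ)
    (he0 : ∀ T, 0 ≤ e T)
    (heb : ∃ M, ∀ T, e T ≤ M) (hyb : ∃ M, ∀ T, y T ≤ M) (hnb : ∃ M, ∀ T, n T ≤ M)
    (hy : Filter.limsup y Filter.atTop = U ^ 2)
    (hN : N = Filter.limsup n Filter.atTop)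
    (hi : ∀ T : ℝ, 0 < T → e T ≤ C / T + F * Real.sqrt (y T))
    (hii : ∀ T : ℝ, 0 < T →
      F ^ 2 ≤ C / T + (F / L) * y T + (β / 2) * (F / U) * e T +
        (1 / β) * (U * F * ν / L ^ 2) + (1 / (2 * β)) * (U * F / L ^ 2) * n T) :
    Filter.limsup e Filter.atTop ≤
      (2 / (2 - β) + (2 / (β * (2 - β))) * Re⁻¹ +
        (1 / (β * (2 - β))) * (N / (L * U))) * (U ^ 3 / L) := by
  have hE : limsup e atTop ≤ F * U := by
    simpa [hy, Real.sqrt_sq hU.le] using limsup_le_mul_sqrt_limsup hF.le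
      (isCoboundedUnder_le_of_le atTop he0) (isBoundedUnder_of hyb) hi
  have hF2 := le_limsup_combination_of_forall_le (by positivity) (by positivity) (by positivity)
    (isBoundedUnder_of hyb) (isBoundedUnder_of heb) (isBoundedUnder_of hnb) hii
  rw [hy, ← hN] at hF2
  rw [hRe]
  exact dissipation_le_of_sq_force_le hF hU hL hβ0 (by linarith) hE hF2

/-- Theorem 2 (algebraic core): the time-averaged energy dissipation of an eddy
viscosity model is controlled by the averaged turbulent viscosity.  Here
`e T = ⟨ε₀ + ε_turb⟩_T`, `y T = ⟨(1/|Ω|)‖u‖²⟩_T` with `limsup y = U²`, and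
`n T = ⟨(1/|Ω|)∫_Ω ν_turb⟩_T` with `N = limsup n = avg(ν_turb)`. From
(i) `e T ≤ C/T + F√(y T)` and
(ii) `F² ≤ C/T + (F/L) y T + (β/2)(F/U) e T + (1/β)UFν/L² + (1/(2β))(UF/L²) n T`,
one has `limsup e ≤ (2/(2−β) + (2/(β(2−β))) Re⁻¹ + (1/(β(2−β))) N/(LU)) U³/L`. -/
theorem eddy_viscosity_dissipation_bound
    (F U L ν C β Re N : ℝ)
    (hF : 0 < F) (hU : 0 < U) (hL : 0 < L) (hν : 0 < ν) (hC : 0 < C)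
    (hβ0 : 0 < β) (hβ1 : β < 1) (hRe : Re = L * U / ν)
    (e y n : ℝ → ℝ)
    (he0 : ∀ T, 0 ≤ e T) (hy0 : ∀ T, 0 ≤ y T) (hn0 : ∀ T, 0 ≤ n T)
    (heb : ∃ M, ∀ T, e T ≤ M) (hyb : ∃ M, ∀ T, y T ≤ M) (hnb : ∃ M, ∀ T, n T ≤ M)
    (hy : Filter.limsup y Filter.atTop = U ^ 2)
    (hN : N = Filter.limsup n Filter.atTop)
    (hi : ∀ T : ℝ, 0 < T → e T ≤ C / T + F * Real.sqrt (y T))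
    (hii : ∀ T : ℝ, 0 < T →
      F ^ 2 ≤ C / T + (F / L) * y T + (β / 2) * (F / U) * e T +
        (1 / β) * (U * F * ν / L ^ 2) + (1 / (2 * β)) * (U * F / L ^ 2) * n T) :
    Filter.limsup e Filter.atTop ≤
      (2 / (2 - β) + (2 / (β * (2 - β))) * Re⁻¹ +
        (1 / (β * (2 - β))) * (N / (L * U))) * (U ^ 3 / L) :=
  eddy_viscosity_dissipation_bound_general F U L ν C β Re N hF hU hL hβ0 hβ1 hRe e y n he0 heb hyb
    hnb hy hN hi hii
end

section
/- Corollary to Theorems 2 and 3 (dissipation bound in terms of model length scale and model fluctuation scale): Let F, U, L, ν, C, μ, a_l, U'_m > 0 and 0 < β < 1, and set Re = LU/ν. Let e, y, n : (0,∞) → ℝ be nonnegative bounded functions with limsup_{T→∞} y(T) = U² and N := limsup_{T→∞} n(T) < ∞, satisfying for every T > 0: (i) e(T) ≤ C/T + F·√(y(T)); and (ii) F² ≤ C/T + (F/L)·y(T) + (β/2)(F/U)·e(T) + (1/β)·U F ν/L² + (1/(2β))·(U F/L²)·n(T). Assume in addition that N ≤ μ · a_l · U'_m. Then limsup_{T→∞}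 e(T) ≤ ( 2/(2−β) + (2/(β(2−β)))·Re^{-1} + (1/(β(2−β)))·μ·(a_l/L)·(U'_m/U) ) · U³/L. -/
/-!
Pass to the limsup in the two finite-time inequalities, where the `C / T` terms vanish. Inequality
(i) gives `limsup e ≤ F U`. Inequality (ii), multiplied by `U / F`, gives
`F U ≤ U³/L + (β/2) limsup e + (1/β) U² ν / L² + (1/(2β)) (U/L)² N`; chaining the two and
absorbing `(β/2) limsup e` on the left leaves `(1 - β/2) limsup e` bounded by the remaining terms,
into which `N ≤ μ a_l U'_m` is substituted.
-/

open Filter Topology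

theorem le_of_forall_pos_le_add_mul {a b K : ℝ} (h : ∀ δ > 0, a ≤ b + K * δ) : a ≤ b := by
  have hlim : Tendsto (fun δ : ℝ => b + K * δ) (𝓝[>] 0) (𝓝 b) := by
    have hcont : Continuous fun δ : ℝ => b + K * δ := by fun_prop
    simpa using (hcont.tendsto 0).mono_left nhdsWithin_le_nhds
  exact ge_of_tendsto hlim (eventually_nhdsWithin_of_forall h)

theorem limsup_le_of_forall_pos_eventually_le {ι : Type*} {l : Filter ι} {u : ι → ℝ} {b K : ℝ}
    (hu : IsCoboundedUnder (· ≤ ·) l u) (h : ∀ δ > 0, ∀ᶠ x in l, u x ≤ b + K * δ) :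
    limsup u l ≤ b :=
  le_of_forall_pos_le_add_mul fun δ hδ => limsup_le_of_le hu (h δ hδ)

theorem eventually_div_lt_atTop (C : ℝ) {δ : ℝ} (hδ : 0 < δ) : ∀ᶠ T in atTop, C / T < δ :=
  (tendsto_const_nhds.div_atTop tendsto_id).eventually (gt_mem_nhds hδ)

theorem limsup_le_mul_of_le_div_add_mul_sqrt {e y : ℝ → ℝ} {C F U : ℝ} (hF : 0 ≤ F) (hU : 0 ≤ U)
    (he : IsCoboundedUnder (· ≤ ·) atTop e) (hy : IsBoundedUnder (· ≤ ·) atTop y)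
    (hyU : limsup y atTop = U ^ 2) (hi : ∀ T > 0, e T ≤ C / T + F * √(y T)) :
    limsup e atTop ≤ F * U := by
  refine limsup_le_of_forall_pos_eventually_le (K := 1 + F) he fun δ hδ => ?_
  have hUδ : 0 < U + δ := by linarith
  have hy_lt : ∀ᶠ T in atTop, y T < (U + δ) ^ 2 :=
    eventually_lt_of_limsup_lt (by rw [hyU]; gcongr; linarith) hy
  filter_upwards [eventually_gt_atTop 0, eventually_div_lt_atTop C hδ, hy_lt]
    with T hT hCT hyT
  have hsqrt : F * √(y T) ≤ F * (U + δ) := by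
    gcongr
    exact ((Real.sqrt_lt' hUδ).mpr hyT).le
  linarith [hi T hT]

theorem le_add_mul_limsup_of_forall_le_div_add {u v w : ℝ → ℝ} {x C a b c d : ℝ}
    (ha : 0 ≤ a) (hb : 0 ≤ b) (hc : 0 ≤ c) (hu : IsBoundedUnder (· ≤ ·) atTop u)
    (hv : IsBoundedUnder (· ≤ ·) atTop v) (hw : IsBoundedUnder (· ≤ ·) atTop w)
    (h : ∀ T > 0, x ≤ C / T + a * u T + b * v T + d + c * w T) :
    x ≤ a * limsup u atTop + b * limsup v atTop + d + c * limsup w atTop := by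
  refine le_of_forall_pos_le_add_mul (K := 1 + a + b + c) fun δ hδ => ?_
  have near_limsup {f : ℝ → ℝ} (hf : IsBoundedUnder (· ≤ ·) atTop f) :
      ∀ᶠ T in atTop, f T < limsup f atTop + δ :=
    eventually_lt_of_limsup_lt (lt_add_of_pos_right _ hδ) hf
  obtain ⟨T, hT, hCT, huT, hvT, hwT⟩ := ((eventually_gt_atTop 0).and
    ((eventually_div_lt_atTop C hδ).and ((near_limsup hu).and
    ((near_limsup hv).and (near_limsup hw))))).exists
  have hauT := mul_le_mul_of_nonneg_left huT.le ha
  have hbvT := mul_le_mul_of_nonneg_left hvT.le hb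
  have hcwT := mul_le_mul_of_nonneg_left hwT.le hc
  linarith [h T hT]

theorem dissipation_le_of_force_balance {E F U L ν β N μ a U' : ℝ} (hF : 0 < F) (hU : 0 < U)
    (hL : 0 < L) (hβ0 : 0 < β) (hβ2 : β < 2) (hE : E ≤ F * U)
    (hbal : F ^ 2 ≤ (F / L) * U ^ 2 + (β / 2) * (F / U) * E + (1 / β) * (U * F * ν / L ^ 2) +
      (1 / (2 * β)) * (U * F / L ^ 2) * N)
    (hN : N ≤ μ * a * U') :
    E ≤ (2 / (2 - β) + (2 / (β * (2 - β))) * (L * U / ν)⁻¹ +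
      (1 / (β * (2 - β))) * (μ * (a / L) * (U' / U))) * (U ^ 3 / L) := by
  have hbal' : F * U ≤ U ^ 3 / L + (β / 2) * E + (1 / β) * (U ^ 2 * ν / L ^ 2) +
      (1 / β) * (U / L) ^ 2 * N / 2 := by
    refine le_of_mul_le_mul_left ?_ hF
    calc F * (F * U) = U * F ^ 2 := by ring
      _ ≤ U * ((F / L) * U ^ 2 + (β / 2) * (F / U) * E + (1 / β) * (U * F * ν / L ^ 2) +
          (1 / (2 * β)) * (U * F / L ^ 2) * N) := by gcongr
      _ = F * (U ^ 3 / L + (β / 2) * E + (1 / β) * (U ^ 2 * ν / L ^ 2) +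
          (1 / β) * (U / L) ^ 2 * N / 2) := by field_simp
  have hNterm : (1 / β) * (U / L) ^ 2 * N ≤ (1 / β) * (U / L) ^ 2 * (μ * a * U') := by gcongr
  have h2β : 0 < 2 - β := by linarith
  calc E ≤ (2 * (U ^ 3 / L) + 2 * (1 / β) * (U ^ 2 * ν / L ^ 2) +
        (1 / β) * (U / L) ^ 2 * (μ * a * U')) / (2 - β) := by
        rw [le_div_iff₀ h2β]
        linarith
    _ = _ := by field_simp

theorem eddy_viscosity_dissipation_bound_corollary_general
    (F U L ν C β Re N μc a_l U'm : ℝ)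
    (hF : 0 < F) (hU : 0 < U) (hL : 0 < L)
    (hβ0 : 0 < β) (hβ1 : β < 1) (hRe : Re = L * U / ν)
    (e y n : ℝ → ℝ)
    (he0 : ∀ T, 0 ≤ e T)
    (heb : ∃ M, ∀ T, e T ≤ M) (hyb : ∃ M, ∀ T, y T ≤ M) (hnb : ∃ M, ∀ T, n T ≤ M)
    (hy : Filter.limsup y Filter.atTop = U ^ 2)
    (hN : N = Filter.limsup n Filter.atTop)
    (hNle : N ≤ μc * a_l * U'm)
    (hi : ∀ T : ℝ, 0 < T → e T ≤ C / T + F * Real.sqrt (y T))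
    (hii : ∀ T : ℝ, 0 < T →
      F ^ 2 ≤ C / T + (F / L) * y T + (β / 2) * (F / U) * e T +
        (1 / β) * (U * F * ν / L ^ 2) + (1 / (2 * β)) * (U * F / L ^ 2) * n T) :
    Filter.limsup e Filter.atTop ≤
      (2 / (2 - β) + (2 / (β * (2 - β))) * Re⁻¹ +
        (1 / (β * (2 - β))) * (μc * (a_l / L) * (U'm / U))) * (U ^ 3 / L) := by
  subst hRe hN
  have hE : limsup e atTop ≤ F * U :=
    limsup_le_mul_of_le_div_add_mul_sqrt hF.le hU.le (isCoboundedUnder_le_of_le atTop he0)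
      (isBoundedUnder_of hyb) hy hi
  have hbal := le_add_mul_limsup_of_forall_le_div_add (by positivity) (by positivity)
    (by positivity) (isBoundedUnder_of hyb) (isBoundedUnder_of heb) (isBoundedUnder_of hnb) hii
  rw [hy] at hbal
  exact dissipation_le_of_force_balance hF hU hL hβ0 (by linarith) hE hbal hNle

/-- Corollary to Theorems 2 and 3: dissipation bound in terms of the average
model length scale `a_l = avg(l)` and the modeled fluctuation scale
`U'_m = U'_model`.  Under the hypotheses of Theorem 2 and the additional bound
`N = avg(ν_turb) ≤ μ a_l U'_m` (the conclusion of Theorem 3), one has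
`limsup e ≤ (2/(2−β) + (2/(β(2−β))) Re⁻¹ + (1/(β(2−β))) μ (a_l/L)(U'_m/U)) U³/L`. -/
theorem eddy_viscosity_dissipation_bound_corollary
    (F U L ν C β Re N μc a_l U'm : ℝ)
    (hF : 0 < F) (hU : 0 < U) (hL : 0 < L) (hν : 0 < ν) (hC : 0 < C)
    (hμc : 0 < μc) (hal : 0 < a_l) (hUm : 0 < U'm)
    (hβ0 : 0 < β) (hβ1 : β < 1) (hRe : Re = L * U / ν)
    (e y n : ℝ → ℝ)
    (he0 : ∀ T, 0 ≤ e T) (hy0 : ∀ T, 0 ≤ y T) (hn0 : ∀ T, 0 ≤ n T)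
    (heb : ∃ M, ∀ T, e T ≤ M) (hyb : ∃ M, ∀ T, y T ≤ M) (hnb : ∃ M, ∀ T, n T ≤ M)
    (hy : Filter.limsup y Filter.atTop = U ^ 2)
    (hN : N = Filter.limsup n Filter.atTop)
    (hNle : N ≤ μc * a_l * U'm)
    (hi : ∀ T : ℝ, 0 < T → e T ≤ C / T + F * Real.sqrt (y T))
    (hii : ∀ T : ℝ, 0 < T →
      F ^ 2 ≤ C / T + (F / L) * y T + (β / 2) * (F / U) * e T +
        (1 / β) * (U * F * ν / L ^ 2) + (1 / (2 * β)) * (U * F / L ^ 2) * n T) :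
    Filter.limsup e Filter.atTop ≤
      (2 / (2 - β) + (2 / (β * (2 - β))) * Re⁻¹ +
        (1 / (β * (2 - β))) * (μc * (a_l / L) * (U'm / U))) * (U ^ 3 / L) :=
  eddy_viscosity_dissipation_bound_corollary_general F U L ν C β Re N μc a_l U'm hF hU hL hβ0 hβ1
    hRe e y n he0 heb hyb hnb hy hN hNle hi hii
end
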